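/- Let β_1,…,β_n be a T-action datum in V and let 1 ≤ j < j' ≤ n. There exists θ ∈ S(λ,β) with J_θ = {j,j'} if and only if γ_{j'} = γ_j, γ_k ≠ γ_j for all j < k < j', and a_{γ_k,γ_j} is a nonpositive integer for all j < k < j'. In that case the (unique) such θ is given by θ_j = θ_{j'} = −1, θ_k = −a_{γ_k,γ_j} for j < k < j', and θ_k = 0 for all other k ∈ [1,n]. -/

import Mathlib

open Finset Matrix

noncomputable section

/-- The standard embedding of an integer vector into `ℂⁿ`. -/
def cvec {n : ℕ} (w : Fin n → ℤ) : Fin n → ℂ := fun j => (w j : ℂ)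

/-- `J_w = { j : w_j = -1 }`. -/
def Jset {n : ℕ} (w : Fin n → ℤ) : Finset (Fin n) :=
  Finset.univ.filter (fun j => w j = -1)

/-- The linear map `β : ℂⁿ → V`, `w ↦ ∑ w_j β_j`. -/
def bmap {n : ℕ} {V : Type*} [AddCommGroup V] [Module ℂ V]
    (β : Fin n → V) (w : Fin n → ℂ) : V :=
  ∑ j, w j • β j

/-- The pair `(λ, β)` is T-log-symplectic. -/
def TLogSymp {n : ℕ} {V : Type*} [AddCommGroup V] [Module ℂ V]
    (M : Matrix (Fin n) (Fin n) ℂ) (β : Fin n → V) : Prop :=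
  ∀ w : Fin n → ℂ, M.mulVec w = 0 → bmap β w = 0 → w = 0

/-- The set `W(λ, β)`. -/
def Wset {n : ℕ} {V : Type*} [AddCommGroup V] [Module ℂ V]
    (M : Matrix (Fin n) (Fin n) ℂ) (β : Fin n → V) : Set (Fin n → ℤ) :=
  {w | (∀ j, -1 ≤ w j) ∧ (∀ j, j ∉ Jset w → M.mulVec (cvec w) j = 0) ∧
    bmap β (cvec w) = 0}

/-- The set `S(λ, β)` of smoothable weights. -/
def Sset {n : ℕ} {V : Type*} [AddCommGroup V] [Module ℂ V]
    (M : Matrix (Fin n) (Fin n) ℂ) (β : Fin n → V) : Set (Fin n → ℤ) :=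
  {θ | θ ∈ Wset M β ∧ (Jset θ).card = 2}

/-- `S_m`: sums of exactly `m` elements of `S`, repetitions allowed. -/
def SumOf {n : ℕ} (S : Set (Fin n → ℤ)) (m : ℕ) : Set (Fin n → ℤ) :=
  {w | ∃ l : Multiset (Fin n → ℤ), (∀ x ∈ l, x ∈ S) ∧ Multiset.card l = m ∧ l.sum = w}

/-- `S_{≥ m}`: sums of at least `m` elements of `S`, repetitions allowed. -/
def SumGE {n : ℕ} (S : Set (Fin n → ℤ)) (m : ℕ) : Set (Fin n → ℤ) :=
  {w | ∃ m', m ≤ m' ∧ w ∈ SumOf S m'}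

/-- A vector `w ∈ ℤⁿ` is negatively bordered. -/
def NegBordered {n : ℕ} (w : Fin n → ℤ) : Prop :=
  ∃ j k : Fin n, j < k ∧ w j = -1 ∧ w k = -1 ∧ (∀ i, i < j → w i = 0) ∧
    (∀ i, k < i → w i = 0) ∧ (∀ i, j < i → i < k → 0 ≤ w i)

/-- The Cartan number `a_{b,ξ} = 2⟨b,ξ⟩/⟨b,b⟩`. -/
def cartan {V : Type*} [AddCommGroup V] [Module ℂ V]
    (B : V →ₗ[ℂ] V →ₗ[ℂ] ℂ) (b ξ : V) : ℂ :=
  2 * B b ξ / B b b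

/-- The reflection `s_b(ξ) = ξ - a_{b,ξ} b`. -/
def sRefl {V : Type*} [AddCommGroup V] [Module ℂ V]
    (B : V →ₗ[ℂ] V →ₗ[ℂ] ℂ) (b ξ : V) : V :=
  ξ - cartan B b ξ • b

/-- `reflL B g m = s_{g 0} ∘ s_{g 1} ∘ ⋯ ∘ s_{g (m-1)}`. -/
def reflL {V : Type*} [AddCommGroup V] [Module ℂ V]
    (B : V →ₗ[ℂ] V →ₗ[ℂ] ℂ) (g : ℕ → V) : ℕ → V → V
  | 0, ξ => ξ
  | m + 1, ξ => reflL B g m (sRefl B (g m) ξ)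

/-- `reflR B g m = s_{g (m-1)} ∘ ⋯ ∘ s_{g 1} ∘ s_{g 0}`. -/
def reflR {V : Type*} [AddCommGroup V] [Module ℂ V]
    (B : V →ₗ[ℂ] V →ₗ[ℂ] ℂ) (g : ℕ → V) : ℕ → V → V
  | 0, ξ => ξ
  | m + 1, ξ => sRefl B (g m) (reflR B g m ξ)

/-- Extension of a `Fin n`-indexed family to `ℕ` by zero. -/
def gext {n : ℕ} {V : Type*} [AddCommGroup V] (v : Fin n → V) : ℕ → V :=
  fun t => if h : t < n then v ⟨t, h⟩ else 0

/-- `γ_j = s_{β_1} s_{β_2} ⋯ s_{β_{j-1}} (β_j)`. -/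
def gam {n : ℕ} {V : Type*} [AddCommGroup V] [Module ℂ V]
    (B : V →ₗ[ℂ] V →ₗ[ℂ] ℂ) (β : Fin n → V) (j : Fin n) : V :=
  reflL B (gext β) j.val (β j)

/-- The Poisson coefficient matrix `λ` of a T-action datum: `λ_{jk} = -⟨β_j, β_k⟩` for
`j < k`, `⟨β_j, β_k⟩` for `j > k`, and `0` on the diagonal. -/
def lam {n : ℕ} {V : Type*} [AddCommGroup V] [Module ℂ V]
    (B : V →ₗ[ℂ] V →ₗ[ℂ] ℂ) (β : Fin n → V) : Matrix (Fin n) (Fin n) ℂ :=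
  Matrix.of fun j k =>
    if j < k then -(B (β j) (β k)) else if k < j then B (β j) (β k) else 0

/-- The upper triangular matrix `Q` with `Q_{jj} = 1` and `Q_{jk} = a_{γ_j, γ_k}` for
`j < k`. -/
def Qmat {n : ℕ} {V : Type*} [AddCommGroup V] [Module ℂ V]
    (B : V →ₗ[ℂ] V →ₗ[ℂ] ℂ) (γ : Fin n → V) : Matrix (Fin n) (Fin n) ℂ :=
  Matrix.of fun j k => if j = k then 1 else if j < k then cartan B (γ j) (γ k) else 0

open scoped Classical in
/-- The set `{k ∈ [j+1, n] : γ_k = γ_j}`, whose minimum (when it exists) is `j⁺`. -/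
def plusSet {n : ℕ} {V : Type*} (γ : Fin n → V) (j : Fin n) : Finset (Fin n) :=
  Finset.univ.filter (fun k => j < k ∧ γ k = γ j)

/-- `e_{j⁺} ∈ ℂⁿ`, with the convention `e_{+∞} = 0`. -/
def eplus {n : ℕ} {V : Type*} (γ : Fin n → V) (j : Fin n) : Fin n → ℂ :=
  if h : (plusSet γ j).Nonempty then Pi.single ((plusSet γ j).min' h) 1 else 0

/-- `θ^{(j)} = Q (e_j - e_{j⁺}) ∈ ℂⁿ`. -/
def thetaC {n : ℕ} {V : Type*} [AddCommGroup V] [Module ℂ V]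
    (B : V →ₗ[ℂ] V →ₗ[ℂ] ℂ) (β : Fin n → V) (j : Fin n) : Fin n → ℂ :=
  (Qmat B (gam B β)).mulVec ((Pi.single j 1 : Fin n → ℂ) - eplus (gam B β) j)

/-- The linear map `β : ℂⁿ → V`, `w ↦ ∑ w_j β_j`, as a bundled linear map. -/
def betaLin {n : ℕ} {V : Type*} [AddCommGroup V] [Module ℂ V]
    (β : Fin n → V) : (Fin n → ℂ) →ₗ[ℂ] V where
  toFun w := ∑ j, w j • β j
  map_add' x y := by simp [add_smul, Finset.sum_add_distrib]
  map_smul' a x := by simp [Finset.smul_sum, smul_smul]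


/- Write `P_m = ∑_{l < m} θ_l β_l` and `R_m = s_{β_0} ⋯ s_{β_{m-1}}`, so that `γ_k = R_k β_k`.
When `∑ θ_l β_l = 0`, the `k`-th entry of `λ θ` is `2⟨β_k, P_k⟩ + ⟨β_k, β_k⟩ θ_k`, so it vanishes
iff `θ_k = -a_{β_k, P_k} = -a_{γ_k, Φ_k}`, where `Φ_m = R_m P_m`. Since `s_{β_k} β_k = -β_k`, the
transported partial sums obey `Φ_{k+1} = Φ_k - (θ_k + a_{γ_k, Φ_k}) γ_k`: they stay constant
exactly at the indices where `(λ θ)_k = 0`. For `J_θ = {j, j'}` this forces `Φ = 0` up to `j`,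
`Φ = γ_j` on `(j, j']` and `Φ = Φ_n = R_n (β θ) = 0` after `j'`. The last jump
`γ_j = (a_{γ_{j'}, γ_j} - 1) γ_{j'}` happens iff `γ_{j'} = γ_j`, and the middle weights are read
off as `θ_k = -a_{γ_k, γ_j}`. -/

section Reflection

variable {V : Type*} [AddCommGroup V] [Module ℂ V] (B : V →ₗ[ℂ] V →ₗ[ℂ] ℂ)

lemma cartan_zero_right (b : V) : cartan B b 0 = 0 := by
  simp [cartan]

lemma cartan_self {b : V} (hb : B b b ≠ 0) : cartan B b b = 2 := by
  rw [cartan, mul_div_assoc, div_self hb, mul_one]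

lemma cartan_smul_right (b : V) (c : ℂ) (x : V) : cartan B b (c • x) = c * cartan B b x := by
  simp only [cartan, map_smul, smul_eq_mul]
  ring

lemma sRefl_add (b x y : V) : sRefl B b (x + y) = sRefl B b x + sRefl B b y := by
  simp only [sRefl, cartan, map_add, mul_add, add_div, add_smul]
  abel

lemma sRefl_smul (b : V) (c : ℂ) (x : V) : sRefl B b (c • x) = c • sRefl B b x := by
  rw [sRefl, sRefl, cartan_smul_right, smul_sub, smul_smul]

lemma sRefl_add_smul_self {b : V} (hb : B b b ≠ 0) (x : V) (c : ℂ) :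
    sRefl B b (x + c • b) = x - (cartan B b x + c) • b := by
  have hself : sRefl B b b = -b := by rw [sRefl, cartan_self B hb]; module
  rw [sRefl_add, sRefl_smul, hself, sRefl]
  module

/-- As `x / 0 = 0`, `s_b` is the identity when `⟨b, b⟩ = 0`; this is why the following lemmas need
no hypothesis on `b`. -/
lemma sRefl_of_apply_self_eq_zero {b : V} (hb : B b b = 0) (x : V) : sRefl B b x = x := by
  simp [sRefl, cartan, hb]

lemma sRefl_involutive (b : V) : Function.Involutive (sRefl B b) := by
  intro x
  by_cases hb : B b b = 0
  · rw [sRefl_of_apply_self_eq_zero B hb, sRefl_of_apply_self_eq_zero B hb]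
  · have hc : cartan B b (sRefl B b x) = -cartan B b x := by
      simp only [sRefl, cartan, map_sub, map_smul, smul_eq_mul]
      field_simp
      ring
    calc sRefl B b (sRefl B b x) = sRefl B b x - cartan B b (sRefl B b x) • b := rfl
      _ = x := by rw [hc, sRefl]; module

lemma apply_sRefl_sRefl (hB : ∀ x y, B x y = B y x) (b x y : V) :
    B (sRefl B b x) (sRefl B b y) = B x y := by
  by_cases hb : B b b = 0
  · rw [sRefl_of_apply_self_eq_zero B hb, sRefl_of_apply_self_eq_zero B hb]
  · simp only [sRefl, cartan, map_sub, map_smul, LinearMap.sub_apply, LinearMap.smul_apply,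
      smul_eq_mul]
    rw [hB x b]
    field_simp
    ring

variable (g : ℕ → V)

def reflLinear (m : ℕ) : V →ₗ[ℂ] V where
  toFun := reflL B g m
  map_add' x y := by
    induction m generalizing x y with
    | zero => rfl
    | succ m ih => simp only [reflL, sRefl_add, ih]
  map_smul' c x := by
    induction m generalizing x with
    | zero => rfl
    | succ m ih => simp only [reflL, sRefl_smul, ih, RingHom.id_apply]

@[simp]
lemma reflLinear_apply (m : ℕ) (x : V) : reflLinear B g m x = reflL B g m x := rfl

lemma reflL_succ (m : ℕ) : reflL B g (m + 1) = reflL B g m ∘ sRefl B (g m) := rfl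

lemma reflL_injective (m : ℕ) : Function.Injective (reflL B g m) := by
  induction m with
  | zero => exact Function.injective_id
  | succ m ih => exact ih.comp (sRefl_involutive B (g m)).injective

lemma apply_reflL_reflL (hB : ∀ x y, B x y = B y x) (m : ℕ) (x y : V) :
    B (reflL B g m x) (reflL B g m y) = B x y := by
  induction m generalizing x y with
  | zero => rfl
  | succ m ih => simp only [reflL, ih, apply_sRefl_sRefl B hB]

lemma cartan_reflL (hB : ∀ x y, B x y = B y x) (m : ℕ) (x y : V) :
    cartan B (reflL B g m x) (reflL B g m y) = cartan B x y := by
  simp only [cartan, apply_reflL_reflL B g hB]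

end Reflection

section PartialSum

variable {n : ℕ} {V : Type*} [AddCommGroup V] [Module ℂ V] (B : V →ₗ[ℂ] V →ₗ[ℂ] ℂ)
  (β : Fin n → V) (w : Fin n → ℂ)

def partialSum (m : ℕ) : V := ∑ l ∈ univ.filter (fun l : Fin n => l < m), w l • β l

lemma partialSum_zero : partialSum β w 0 = 0 := by
  simp [partialSum]

lemma partialSum_succ (k : Fin n) : partialSum β w (k + 1) = partialSum β w k + w k • β k := by
  have : univ.filter (fun l : Fin n => l < (k : ℕ) + 1) =
      insert k (univ.filter (fun l : Fin n => l < (k : ℕ))) := by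
    ext l
    simp only [mem_filter, mem_univ, true_and, mem_insert, Fin.ext_iff]
    omega
  rw [partialSum, this, sum_insert (by simp), add_comm, partialSum]

lemma partialSum_self : partialSum β w n = bmap β w := by
  simp [partialSum, bmap]

lemma lam_mulVec_apply (hw : bmap β w = 0) (k : Fin n) :
    (lam B β *ᵥ w) k = 2 * B (β k) (partialSum β w k) + B (β k) (β k) * w k := by
  have hzero : ∑ l, B (β k) (β l) * w l = 0 := by
    simpa [bmap, mul_comm] using congrArg (B (β k)) hw
  have hterm : ∀ l, lam B β k l * w l = 2 * (if l < k then B (β k) (β l) * w l else 0)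
      + (if l = k then B (β k) (β k) * w k else 0) - B (β k) (β l) * w l := by
    intro l
    rcases lt_trichotomy l k with h | rfl | h
    · simp only [lam, of_apply, h.not_gt, ↓reduceIte, h, h.ne, add_zero]
      ring
    · simp [lam]
    · simp only [lam, of_apply, h, ↓reduceIte, neg_mul, h.not_gt, mul_zero, h.ne', add_zero,
        zero_sub]
  simp only [mulVec, dotProduct, hterm, sum_sub_distrib, sum_add_distrib, ← mul_sum, hzero,
    sum_ite_eq', mem_univ, if_true, sub_zero, ← sum_filter, partialSum, map_sum, map_smul,
    smul_eq_mul, mul_comm (w _)]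
  rfl

def reflPartialSum (m : ℕ) : V := reflL B (gext β) m (partialSum β w m)

lemma reflPartialSum_zero : reflPartialSum B β w 0 = 0 := by
  rw [reflPartialSum, partialSum_zero]
  rfl

lemma reflPartialSum_self_eq_zero_iff : reflPartialSum B β w n = 0 ↔ bmap β w = 0 := by
  rw [reflPartialSum, partialSum_self, ← reflLinear_apply, map_eq_zero_iff]
  exact reflL_injective B _ n

lemma reflL_gext_succ (k : Fin n) :
    reflL B (gext β) (k + 1) = reflL B (gext β) k ∘ sRefl B (β k) := by
  rw [reflL_succ, gext, dif_pos k.isLt]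

lemma apply_gam_self (hB : ∀ x y, B x y = B y x) (k : Fin n) :
    B (gam B β k) (gam B β k) = B (β k) (β k) :=
  apply_reflL_reflL B _ hB _ _ _

variable {B}

lemma reflPartialSum_succ (hB : ∀ x y, B x y = B y x) (k : Fin n) (hk : B (β k) (β k) ≠ 0) :
    reflPartialSum B β w (k + 1) = reflPartialSum B β w k -
      (w k + cartan B (gam B β k) (reflPartialSum B β w k)) • gam B β k := by
  rw [reflPartialSum, reflL_gext_succ, Function.comp_apply, partialSum_succ,
    sRefl_add_smul_self B hk, ← reflLinear_apply, map_sub, map_smul, reflLinear_apply,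
    reflLinear_apply, reflPartialSum, gam, cartan_reflL B _ hB, add_comm (w k)]

lemma lam_mulVec_eq_zero_iff (hB : ∀ x y, B x y = B y x) (hβ : ∀ i, B (β i) (β i) ≠ 0)
    (hw : bmap β w = 0) (k : Fin n) :
    (lam B β *ᵥ w) k = 0 ↔ w k = -cartan B (gam B β k) (reflPartialSum B β w k) := by
  rw [lam_mulVec_apply B β w hw, reflPartialSum, gam, cartan_reflL B _ hB, cartan]
  have := hβ k
  constructor <;> intro h
  · field_simp
    linear_combination h
  · rw [h]
    field_simp
    ring

lemma reflPartialSum_eq_of_le (hB : ∀ x y, B x y = B y x) (hβ : ∀ i, B (β i) (β i) ≠ 0)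
    {a c : ℕ} (hac : a ≤ c) (hcn : c ≤ n)
    (h : ∀ k : Fin n, a ≤ k → (k : ℕ) < c →
      w k = -cartan B (gam B β k) (reflPartialSum B β w k)) :
    reflPartialSum B β w c = reflPartialSum B β w a := by
  induction c, hac using Nat.le_induction with
  | base => rfl
  | succ c hac ih =>
    have hstep := reflPartialSum_succ β w hB ⟨c, hcn⟩ (hβ _)
    rw [h ⟨c, hcn⟩ hac (Nat.lt_succ_self c), neg_add_cancel, zero_smul, sub_zero] at hstep
    exact hstep.trans (ih (by omega) fun k hak hkc => h k hak (by omega))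

end PartialSum

lemma eq_of_eq_cartan_sub_one_smul {V : Type*} [AddCommGroup V] [Module ℂ V]
    {B : V →ₗ[ℂ] V →ₗ[ℂ] ℂ} {x y : V} (hy : B y y ≠ 0) (h : x = (cartan B y x - 1) • y) :
    x = y := by
  have hc : cartan B y x = 2 * (cartan B y x - 1) := by
    conv_lhs => rw [h, cartan_smul_right, cartan_self B hy]
    ring
  rw [h, show cartan B y x - 1 = 1 by linear_combination -hc, one_smul]

section Profile

variable {n : ℕ} {V : Type*} [AddCommGroup V] [Module ℂ V] {B : V →ₗ[ℂ] V →ₗ[ℂ] ℂ}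
  {β : Fin n → V} {w : Fin n → ℂ} {j j' : Fin n}

def pairProfile (γ : Fin n → V) (j j' : Fin n) (m : ℕ) : V :=
  if (j : ℕ) < m ∧ m ≤ j' then γ j else 0

lemma forall_eq_neg_cartan_pairProfile_iff (hjj' : j < j') :
    (∀ k, k ≠ j → k ≠ j' → w k = -cartan B (gam B β k) (pairProfile (gam B β) j j' k)) ↔
      (∀ k, j < k → k < j' → w k = -cartan B (gam B β k) (gam B β j)) ∧
        ∀ k, k < j ∨ j' < k → w k = 0 := by
  have hmid : ∀ k, j < k → k < j' → pairProfile (gam B β) j j' k = gam B β j := fun k h h' =>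
    if_pos ⟨h, h'.le⟩
  have hout : ∀ k, k < j ∨ j' < k → pairProfile (gam B β) j j' k = 0 := fun k hk =>
    if_neg fun h => hk.elim (fun hk => lt_asymm hk h.1) fun hk => (not_le.2 hk) h.2
  constructor
  · intro h
    refine ⟨fun k h₁ h₂ => ?_, fun k hk => ?_⟩
    · rw [h k h₁.ne' h₂.ne, hmid k h₁ h₂]
    · have hk' : k ≠ j ∧ k ≠ j' := by rcases hk with hk | hk <;> omega
      rw [h k hk'.1 hk'.2, hout k hk, cartan_zero_right, neg_zero]
  · rintro ⟨hmid', hout'⟩ k hkj hkj'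
    rcases lt_or_gt_of_ne hkj with hk | hk
    · rw [hout' k (.inl hk), hout k (.inl hk), cartan_zero_right, neg_zero]
    rcases lt_or_gt_of_ne hkj' with hk' | hk'
    · rw [hmid' k hk hk', hmid k hk hk']
    · rw [hout' k (.inr hk'), hout k (.inr hk'), cartan_zero_right, neg_zero]

lemma reflPartialSum_eq_pairProfile_of_lam_mulVec_eq_zero (hB : ∀ x y, B x y = B y x)
    (hβ : ∀ i, B (β i) (β i) ≠ 0) (hjj' : j < j') (hwj : w j = -1)
    (hwj' : w j' = -1) (hw : bmap β w = 0) (hlam : ∀ k, k ≠ j → k ≠ j' → (lam B β *ᵥ w) k = 0) :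
    gam B β j' = gam B β j ∧
      ∀ m ≤ n, reflPartialSum B β w m = pairProfile (gam B β) j j' m := by
  set Φ := reflPartialSum B β w
  have hsucc (k : Fin n) : Φ (k + 1) = Φ k - (w k + cartan B (gam B β k) (Φ k)) • gam B β k :=
    reflPartialSum_succ β w hB k (hβ k)
  have hconst : ∀ a c, a ≤ c → c ≤ n → (∀ k : Fin n, a ≤ k → (k : ℕ) < c → k ≠ j ∧ k ≠ j') →
      Φ c = Φ a := fun a c hac hcn h =>
    reflPartialSum_eq_of_le β w hB hβ hac hcn fun k h₁ h₂ =>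
      (lam_mulVec_eq_zero_iff β w hB hβ hw k).1 (hlam k (h k h₁ h₂).1 (h k h₁ h₂).2)
  have hbefore : ∀ m ≤ (j : ℕ), Φ m = 0 := fun m hm =>
    (hconst 0 m m.zero_le (by omega) fun k _ hk => by omega).trans (reflPartialSum_zero B β w)
  have hfirst : Φ (j + 1) = gam B β j := by
    rw [hsucc, hbefore j le_rfl, hwj, cartan_zero_right]
    module
  have hmid : ∀ m, (j : ℕ) < m → m ≤ j' → Φ m = gam B β j := fun m h h' =>
    (hconst (j + 1) m h (by omega) fun k hk hk' => by omega).trans hfirst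
  have hafter : ∀ m, (j' : ℕ) < m → m ≤ n → Φ m = 0 := fun m h h' =>
    (hconst m n h' le_rfl fun k hk _ => by omega).symm.trans
      ((reflPartialSum_self_eq_zero_iff B β w).2 hw)
  have hγ : gam B β j = gam B β j' := by
    have hlast := hsucc j'
    rw [hafter (j' + 1) (by omega) j'.isLt, hmid j' hjj' le_rfl, hwj', neg_add_eq_sub] at hlast
    exact eq_of_eq_cartan_sub_one_smul (by rw [apply_gam_self B β hB]; exact hβ j')
      (sub_eq_zero.1 hlast.symm)
  refine ⟨hγ.symm, fun m hm => ?_⟩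
  unfold pairProfile
  split_ifs with h
  · exact hmid m h.1 h.2
  · by_cases hmj : m ≤ j
    · exact hbefore m hmj
    · exact hafter m (by omega) hm

lemma reflPartialSum_eq_pairProfile_of_eq_neg_cartan (hB : ∀ x y, B x y = B y x)
    (hβ : ∀ i, B (β i) (β i) ≠ 0) (hjj' : j < j') (hwj : w j = -1)
    (hwj' : w j' = -1) (hγ : gam B β j' = gam B β j)
    (hcoef : ∀ k, k ≠ j → k ≠ j' → w k = -cartan B (gam B β k) (pairProfile (gam B β) j j' k)) :
    ∀ m ≤ n, reflPartialSum B β w m = pairProfile (gam B β) j j' m := by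
  intro m hm
  induction m with
  | zero => simp [pairProfile, reflPartialSum_zero]
  | succ m ih =>
    set k : Fin n := ⟨m, hm⟩
    have hstep : reflPartialSum B β w (k + 1) = _ := reflPartialSum_succ β w hB k (hβ k)
    rw [hstep, ih (by omega)]
    by_cases hkj : k = j
    · have h₀ : pairProfile (gam B β) j j' k = 0 := if_neg (by omega)
      have h₁ : pairProfile (gam B β) j j' (k + 1) = gam B β j := if_pos (by omega)
      rw [h₀, h₁, hkj, hwj, cartan_zero_right]
      module
    by_cases hkj' : k = j'
    · have h₀ : pairProfile (gam B β) j j' k = gam B β j := if_pos (by omega)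
      have h₁ : pairProfile (gam B β) j j' (k + 1) = 0 := if_neg (by omega)
      have hγγ : B (gam B β j) (gam B β j) ≠ 0 := by rw [apply_gam_self B β hB]; exact hβ j
      rw [h₀, h₁, hkj', hwj', hγ, cartan_self B hγγ]
      module
    · have h₁ : pairProfile (gam B β) j j' (k + 1) = pairProfile (gam B β) j j' k := by
        unfold pairProfile
        congr 1
        exact propext (by omega)
      rw [hcoef k hkj hkj', neg_add_cancel, zero_smul, sub_zero, h₁]

end Profile

section Smoothable

variable {n : ℕ} {V : Type*} [AddCommGroup V] [Module ℂ V] {B : V →ₗ[ℂ] V →ₗ[ℂ] ℂ}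
  {β : Fin n → V} {j j' : Fin n}

theorem bmap_eq_zero_and_lam_mulVec_eq_zero_iff (hB : ∀ x y, B x y = B y x)
    (hβ : ∀ i, B (β i) (β i) ≠ 0) (hjj' : j < j') {w : Fin n → ℂ}
    (hwj : w j = -1) (hwj' : w j' = -1) :
    (bmap β w = 0 ∧ ∀ k, k ≠ j → k ≠ j' → (lam B β *ᵥ w) k = 0) ↔
      gam B β j' = gam B β j ∧
        (∀ k, j < k → k < j' → w k = -cartan B (gam B β k) (gam B β j)) ∧
        ∀ k, k < j ∨ j' < k → w k = 0 := by
  rw [← forall_eq_neg_cartan_pairProfile_iff hjj']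
  constructor
  · rintro ⟨hw, hlam⟩
    obtain ⟨hγ, hΦ⟩ :=
      reflPartialSum_eq_pairProfile_of_lam_mulVec_eq_zero hB hβ hjj' hwj hwj' hw hlam
    refine ⟨hγ, fun k hk hk' => ?_⟩
    rw [← hΦ k k.isLt.le]
    exact (lam_mulVec_eq_zero_iff β w hB hβ hw k).1 (hlam k hk hk')
  · rintro ⟨hγ, hcoef⟩
    have hΦ := reflPartialSum_eq_pairProfile_of_eq_neg_cartan hB hβ hjj' hwj hwj' hγ hcoef
    have hw : bmap β w = 0 := by
      rw [← reflPartialSum_self_eq_zero_iff B β w, hΦ n le_rfl]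
      exact if_neg (by omega)
    refine ⟨hw, fun k hk hk' => (lam_mulVec_eq_zero_iff β w hB hβ hw k).2 ?_⟩
    rw [hΦ k k.isLt.le]
    exact hcoef k hk hk'

lemma eq_neg_one_iff_of_Jset_eq_pair {θ : Fin n → ℤ} (hJ : Jset θ = {j, j'}) (k : Fin n) :
    θ k = -1 ↔ k = j ∨ k = j' := by
  simpa [Jset] using congrArg (k ∈ ·) hJ

lemma mem_Sset_iff_of_Jset_eq_pair (hB : ∀ x y, B x y = B y x) (hβ : ∀ i, B (β i) (β i) ≠ 0)
    (hjj' : j < j') {θ : Fin n → ℤ} (hJ : Jset θ = {j, j'}) :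
    θ ∈ Sset (lam B β) β ↔ (∀ k, -1 ≤ θ k) ∧ gam B β j' = gam B β j ∧
      (∀ k, j < k → k < j' → (θ k : ℂ) = -cartan B (gam B β k) (gam B β j)) ∧
      ∀ k, k < j ∨ j' < k → θ k = 0 := by
  have hθ := eq_neg_one_iff_of_Jset_eq_pair hJ
  have hcard : (Jset θ).card = 2 := by rw [hJ, card_pair hjj'.ne]
  have hJ' : ∀ k, k ∉ Jset θ ↔ k ≠ j ∧ k ≠ j' := by simp [hJ]
  simp only [Sset, Wset, Set.mem_ofPred_eq, hcard, and_true, hJ', and_imp]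
  rw [and_comm (a := ∀ k, _ → _ → _), bmap_eq_zero_and_lam_mulVec_eq_zero_iff hB hβ hjj'
    (by simp [cvec, (hθ j).2 (.inl rfl)]) (by simp [cvec, (hθ j').2 (.inr rfl)])]
  simp [cvec]

lemma exists_mem_Sset_of_cartan_eq_nonpos (hB : ∀ x y, B x y = B y x)
    (hβ : ∀ i, B (β i) (β i) ≠ 0) (hjj' : j < j') (hγ : gam B β j' = gam B β j)
    (hcart : ∀ k, j < k → k < j' →
      ∃ m : ℤ, m ≤ 0 ∧ cartan B (gam B β k) (gam B β j) = (m : ℂ)) :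
    ∃ θ ∈ Sset (lam B β) β, Jset θ = {j, j'} := by
  choose μ hμ using hcart
  classical
  let θ : Fin n → ℤ := fun k =>
    if h : j < k ∧ k < j' then -μ k h.1 h.2 else if k = j ∨ k = j' then -1 else 0
  have hmid : ∀ k (h : j < k) (h' : k < j'), θ k = -μ k h h' := fun k h h' => dif_pos ⟨h, h'⟩
  have hJ : Jset θ = {j, j'} := by
    ext k
    suffices θ k = -1 ↔ k = j ∨ k = j' by simpa [Jset]
    by_cases h : j < k ∧ k < j'
    · rw [hmid k h.1 h.2]
      have := (hμ k h.1 h.2).1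
      constructor <;> intro <;> omega
    · simp only [θ, dif_neg h]
      split_ifs <;> simp_all
  refine ⟨θ, (mem_Sset_iff_of_Jset_eq_pair hB hβ hjj' hJ).2 ⟨fun k => ?_, hγ, fun k h h' => ?_,
    fun k hk => ?_⟩, hJ⟩
  · by_cases h : j < k ∧ k < j'
    · rw [hmid k h.1 h.2]
      linarith [(hμ k h.1 h.2).1]
    · simp only [θ, dif_neg h]
      split_ifs <;> omega
  · rw [hmid k h h', (hμ k h h').2]
    push_cast
    ring
  · have h : ¬(j < k ∧ k < j') := by omega
    have h' : ¬(k = j ∨ k = j') := by omega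
    simp only [θ, dif_neg h, if_neg h']

end Smoothable

theorem stmt12_general (n : ℕ) {V : Type*} [AddCommGroup V] [Module ℂ V]
    (B : V →ₗ[ℂ] V →ₗ[ℂ] ℂ) (hBsymm : ∀ x y, B x y = B y x)
    (β : Fin n → V) (hβ : ∀ j, B (β j) (β j) ≠ 0)
    (j j' : Fin n) (hjj' : j < j') :
    ((∃ θ ∈ Sset (lam B β) β, Jset θ = {j, j'}) ↔
      (gam B β j' = gam B β j ∧ (∀ k, j < k → k < j' → gam B β k ≠ gam B β j) ∧
        (∀ k, j < k → k < j' →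
          ∃ m : ℤ, m ≤ 0 ∧ cartan B (gam B β k) (gam B β j) = (m : ℂ)))) ∧
    (∀ θ ∈ Sset (lam B β) β, Jset θ = {j, j'} →
      (θ j = -1 ∧ θ j' = -1 ∧
        (∀ k, j < k → k < j' → (θ k : ℂ) = -cartan B (gam B β k) (gam B β j)) ∧
        (∀ k, k < j ∨ j' < k → θ k = 0))) := by
  have hmem := fun θ ↦ mem_Sset_iff_of_Jset_eq_pair (θ := θ) hBsymm hβ hjj'
  refine ⟨⟨?_, fun ⟨hγ, _, hcart⟩ => exists_mem_Sset_of_cartan_eq_nonpos hBsymm hβ hjj' hγ hcart⟩,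
    fun θ hθ hJ => ?_⟩
  · rintro ⟨θ, hθ, hJ⟩
    obtain ⟨hge, hγ, hmid, -⟩ := (hmem θ hJ).1 hθ
    have hnonneg : ∀ k, j < k → k < j' → 0 ≤ θ k := fun k h h' => by
      have := (eq_neg_one_iff_of_Jset_eq_pair hJ k).not.2 (by omega)
      have := hge k
      omega
    refine ⟨hγ, fun k h h' hk => ?_, fun k h h' => ⟨-θ k, by linarith [hnonneg k h h'], ?_⟩⟩
    · have hγγ : B (gam B β j) (gam B β j) ≠ 0 := by rw [apply_gam_self B β hBsymm]; exact hβ j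
      have hθk := hmid k h h'
      rw [hk, cartan_self B hγγ] at hθk
      have : θ k = -2 := by exact_mod_cast hθk
      linarith [hnonneg k h h']
    · push_cast
      rw [hmid k h h', neg_neg]
  · obtain ⟨-, -, hmid, hout⟩ := (hmem θ hJ).1 hθ
    have hθ := eq_neg_one_iff_of_Jset_eq_pair hJ
    exact ⟨(hθ j).2 (.inl rfl), (hθ j').2 (.inr rfl), hmid, hout⟩

theorem stmt12 (n : ℕ) (hn : 0 < n) {V : Type*} [AddCommGroup V] [Module ℂ V]
    (B : V →ₗ[ℂ] V →ₗ[ℂ] ℂ) (hBsymm : ∀ x y, B x y = B y x)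
    (β : Fin n → V) (hβ : ∀ j, B (β j) (β j) ≠ 0)
    (j j' : Fin n) (hjj' : j < j') :
    ((∃ θ ∈ Sset (lam B β) β, Jset θ = {j, j'}) ↔
      (gam B β j' = gam B β j ∧ (∀ k, j < k → k < j' → gam B β k ≠ gam B β j) ∧
        (∀ k, j < k → k < j' →
          ∃ m : ℤ, m ≤ 0 ∧ cartan B (gam B β k) (gam B β j) = (m : ℂ)))) ∧
    (∀ θ ∈ Sset (lam B β) β, Jset θ = {j, j'} →
      (θ j = -1 ∧ θ j' = -1 ∧
        (∀ k, j < k → k < j' → (θ k : ℂ) = -cartan B (gam B β k) (gam B β j)) ∧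
        (∀ k, k < j ∨ j' < k → θ k = 0))) :=
  stmt12_general n B hBsymm β hβ j j' hjj'
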